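/- arXiv:2512.00176 — 6 statements merged into one kernel-verified Lean document; each statement's English description precedes it below -/
import Mathlib

section
/- Let G be a directed graph with edge capacities c, root r, terminal set T, and parameter λ > 0. In the (λ,T)-flow network (G extended with a super-sink t* and arcs (t,t*) of capacity λ for each t ∈ T), let (A, B ∪ {t*}) be a minimum (r,t*)-cut with r ∈ A. Then for every terminal t ∈ T ∩ A, the (r,t)-edge-connectivity in G is at least λ. -/
/-!
For a cut `U` separating `t` from `r`, the vertex set `B ∪ U` is again the sink side of an
`(r,t*)`-cut. Passing from `B` to `B ∪ U` costs at most `cutCap U` on arcs of `G`,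
by subadditivity of the cut function, and saves at least the auxiliary arc `(t,t*)` of
capacity `λ`. Minimality of `B` therefore forces `λ ≤ cutCap U`.
-/

open Classical Finset
noncomputable section

variable {V : Type*} [Fintype V] [DecidableEq V]

/-- The set of arcs of `E` entering the vertex set `X`. -/
def inCut (E : Finset (V × V)) (X : Finset V) : Finset (V × V) :=
  E.filter (fun e => e.1 ∉ X ∧ e.2 ∈ X)

/-- The capacity of the cut of arcs entering `X`. -/
def cutCap (E : Finset (V × V)) (c : V × V → ℝ) (X : Finset V) : ℝ :=
  ∑ e ∈ inCut E X, c e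

/-- The capacity of the `(r,t*)`-cut `(V \ B, B ∪ {t*})` in the `(λ,T)`-flow network:
arcs of `G` from `V \ B` into `B`, plus the auxiliary arcs `(t,t*)` of capacity `lam`
for each terminal `t ∈ T \ B`. -/
def netCutCap (E : Finset (V × V)) (c : V × V → ℝ) (T : Finset V) (lam : ℝ)
    (B : Finset V) : ℝ :=
  cutCap E c B + lam * ((T \ B).card : ℝ)

omit [Fintype V] in
theorem inCut_union_subset (E : Finset (V × V)) (X Y : Finset V) :
    inCut E (X ∪ Y) ⊆ inCut E X ∪ inCut E Y := by
  intro e he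
  simp only [inCut, mem_filter, mem_union, not_or] at he ⊢
  tauto

omit [Fintype V] in
theorem cutCap_union_le (E : Finset (V × V)) {c : V × V → ℝ} (hc : ∀ e, 0 ≤ c e)
    (X Y : Finset V) : cutCap E c (X ∪ Y) ≤ cutCap E c X + cutCap E c Y :=
  calc cutCap E c (X ∪ Y)
      ≤ ∑ e ∈ inCut E X ∪ inCut E Y, c e :=
        sum_le_sum_of_subset_of_nonneg (inCut_union_subset E X Y) fun e _ _ => hc e
    _ ≤ ∑ e ∈ inCut E X ∪ inCut E Y, c e + ∑ e ∈ inCut E X ∩ inCut E Y, c e :=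
        le_add_of_nonneg_right (sum_nonneg fun e _ => hc e)
    _ = cutCap E c X + cutCap E c Y := sum_union_inter

omit [Fintype V] in
theorem card_sdiff_union_lt {T B U : Finset V} {t : V} (ht : t ∈ T) (htB : t ∉ B)
    (htU : t ∈ U) : #(T \ (B ∪ U)) < #(T \ B) :=
  card_lt_card <| (ssubset_iff_of_subset (sdiff_subset_sdiff le_rfl subset_union_left)).2
    ⟨t, mem_sdiff.2 ⟨ht, htB⟩, fun h => (mem_sdiff.1 h).2 (mem_union_right B htU)⟩

theorem stmt_0_general (E : Finset (V × V)) (c : V × V → ℝ) (hc : ∀ e, 0 ≤ c e)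
    (r : V) (T : Finset V) (lam : ℝ) (hlam : 0 < lam)
    (B : Finset V) (hB : r ∉ B)
    (hmin : ∀ B' : Finset V, r ∉ B' →
      netCutCap E c T lam B ≤ netCutCap E c T lam B') :
    ∀ t ∈ T, t ∉ B →
      ∀ U : Finset V, t ∈ U → r ∉ U → lam ≤ cutCap E c U := by
  intro t ht htB U htU hrU
  have hmin' : netCutCap E c T lam B ≤ netCutCap E c T lam (B ∪ U) :=
    hmin (B ∪ U) (by simp [hB, hrU])
  have hsub := cutCap_union_le E hc B U
  have hcard : (#(T \ (B ∪ U)) : ℝ) + 1 ≤ #(T \ B) := by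
    exact_mod_cast card_sdiff_union_lt ht htB htU
  have hsaving := mul_le_mul_of_nonneg_left hcard hlam.le
  unfold netCutCap at hmin'
  linarith

/-- if `(A, B ∪ {t*})` is a minimum `(r,t*)`-cut in the `(λ,T)`-flow
network, then every terminal `t ∈ T ∩ A` has `(r,t)`-edge-connectivity at least `λ`:
every edge cut separating `r` from `t` in `G` has capacity at least `λ`. -/
theorem stmt_0 (E : Finset (V × V)) (c : V × V → ℝ) (hc : ∀ e, 0 ≤ c e)
    (r : V) (T : Finset V) (hT : r ∉ T) (lam : ℝ) (hlam : 0 < lam)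
    (B : Finset V) (hB : r ∉ B)
    (hmin : ∀ B' : Finset V, r ∉ B' →
      netCutCap E c T lam B ≤ netCutCap E c T lam B') :
    ∀ t ∈ T, t ∉ B →
      ∀ U : Finset V, t ∈ U → r ∉ U → lam ≤ cutCap E c U :=
  stmt_0_general E c hc r T lam hlam B hB hmin
end
end

section
/- Let G be a directed graph with edge capacities, root r, terminals T, parameter λ > 0, and let (A, B ∪ {t*}) be a minimum (r,t*)-cut in the (λ,T)-flow network. Then the edge cut from A to B in G is a minimum (r, T ∩ B)-cut in G, i.e., its capacity equals the minimum capacity over all edge cuts separating r from all terminals in T ∩ B. -/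
open Classical Finset
noncomputable section

variable {V : Type*} [Fintype V] [DecidableEq V]

theorem Finset.card_sdiff_le_card_sdiff_of_inter_subset {α : Type*} [DecidableEq α]
    {s t u : Finset α} (h : s ∩ t ⊆ u) : (s \ u).card ≤ (s \ t).card :=
  card_le_card (by grind)

omit [Fintype V] in
theorem cutCap_le_of_netCutCap_le {E : Finset (V × V)} {c : V × V → ℝ} {T : Finset V} {lam : ℝ}
    (hlam : 0 ≤ lam) {B B' : Finset V} (hsub : T ∩ B ⊆ B')
    (hnet : netCutCap E c T lam B ≤ netCutCap E c T lam B') :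
    cutCap E c B ≤ cutCap E c B' := by
  have hcard : ((T \ B').card : ℝ) ≤ (T \ B).card := by
    exact_mod_cast card_sdiff_le_card_sdiff_of_inter_subset hsub
  have hpen := mul_le_mul_of_nonneg_left hcard hlam
  unfold netCutCap at hnet
  linarith

theorem stmt_1_general (E : Finset (V × V)) (c : V × V → ℝ)
    (r : V) (T : Finset V) (lam : ℝ) (hlam : 0 < lam)
    (B : Finset V) (hB : r ∉ B)
    (hmin : ∀ B' : Finset V, r ∉ B' →
      netCutCap E c T lam B ≤ netCutCap E c T lam B') :
    IsLeast {x : ℝ | ∃ B' : Finset V, r ∉ B' ∧ T ∩ B ⊆ B' ∧ x = cutCap E c B'}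
      (cutCap E c B) := by
  refine ⟨⟨B, hB, inter_subset_right, rfl⟩, ?_⟩
  rintro x ⟨B', hB', hsub, rfl⟩
  exact cutCap_le_of_netCutCap_le hlam.le hsub (hmin B' hB')

/-- if `(A, B ∪ {t*})` is a minimum `(r,t*)`-cut in the `(λ,T)`-flow
network, then the cut of arcs from `A` to `B` in `G` (i.e. `∂⁻B`) is a minimum
`(r, T ∩ B)`-cut in `G`: its capacity is the least capacity of any cut `∂⁻B'`
with `r ∉ B'` and `T ∩ B ⊆ B'`. -/
theorem stmt_1 (E : Finset (V × V)) (c : V × V → ℝ) (hc : ∀ e, 0 ≤ c e)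
    (r : V) (T : Finset V) (hT : r ∉ T) (lam : ℝ) (hlam : 0 < lam)
    (B : Finset V) (hB : r ∉ B)
    (hmin : ∀ B' : Finset V, r ∉ B' →
      netCutCap E c T lam B ≤ netCutCap E c T lam B') :
    IsLeast {x : ℝ | ∃ B' : Finset V, r ∉ B' ∧ T ∩ B ⊆ B' ∧ x = cutCap E c B'}
      (cutCap E c B) :=
  stmt_1_general E c r T lam hlam B hB hmin
end
end

section
/- Let G be a directed graph with edge capacities, root r, terminals T, parameter λ > 0, and let (A, B ∪ {t*}) be a minimum (r,t*)-cut in the (λ,T)-flow network. Then for every terminal t ∈ T ∩ B there exists a minimum (r,t)-cut in G whose sink component is contained in B; that is, there exists U ⊆ B with t ∈ U, r ∉ U, such that the capacity of the set of arcs entering U equals the minimum (r,t)-cut capacity in G. -/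
/-!
Uncrossing. Let `W` be any minimum `(r,t)`-cut of `G`. Enlarging the sink side `B` to `W ∪ B`
keeps `r` on the source side and cuts no more terminal arcs `(t', t*)`, so minimality of `B` in
the network forces `c(∂⁻B) ≤ c(∂⁻(W ∪ B))`. Submodularity of the in-cut function,
`c(∂⁻(W ∩ B)) + c(∂⁻(W ∪ B)) ≤ c(∂⁻W) + c(∂⁻B)`, then gives `c(∂⁻(W ∩ B)) ≤ c(∂⁻W)`,
so `W ∩ B` is again a minimum `(r,t)`-cut.
-/

open Classical Finset
noncomputable section

variable {V : Type*} [Fintype V] [DecidableEq V]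

section Uncrossing

variable {α : Type*} [DecidableEq α]

def rtCutCaps (E : Finset (α × α)) (c : α × α → ℝ) (r t : α) : Set ℝ :=
  {x | ∃ W : Finset α, t ∈ W ∧ r ∉ W ∧ x = cutCap E c W}

theorem cutCap_eq_sum_ite (E : Finset (α × α)) (c : α × α → ℝ) (X : Finset α) :
    cutCap E c X = ∑ e ∈ E, if e.1 ∉ X ∧ e.2 ∈ X then c e else 0 := by
  rw [cutCap, inCut, sum_filter]

theorem cutCap_inter_add_cutCap_union_le (E : Finset (α × α)) {c : α × α → ℝ} (hc : ∀ e, 0 ≤ c e)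
    (X Y : Finset α) :
    cutCap E c (X ∩ Y) + cutCap E c (X ∪ Y) ≤ cutCap E c X + cutCap E c Y := by
  simp only [cutCap_eq_sum_ite, ← sum_add_distrib]
  refine sum_le_sum fun e _ => ?_
  by_cases h₁ : e.1 ∈ X <;> by_cases h₂ : e.1 ∈ Y <;>
    by_cases h₃ : e.2 ∈ X <;> by_cases h₄ : e.2 ∈ Y <;>
      simp [h₁, h₂, h₃, h₄] <;> linarith [hc e]

theorem isLeast_rtCutCaps_inter {E : Finset (α × α)} {c : α × α → ℝ} (hc : ∀ e, 0 ≤ c e) {r t : α}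
    {W B : Finset α} (htW : t ∈ W) (hW : IsLeast (rtCutCaps E c r t) (cutCap E c W))
    (htB : t ∈ B) (hrB : r ∉ B) (hB : cutCap E c B ≤ cutCap E c (W ∪ B)) :
    IsLeast (rtCutCaps E c r t) (cutCap E c (W ∩ B)) := by
  refine ⟨⟨W ∩ B, mem_inter.2 ⟨htW, htB⟩, fun h => hrB (mem_inter.1 h).2, rfl⟩, fun x hx => ?_⟩
  have := cutCap_inter_add_cutCap_union_le E hc W B
  linarith [hW.2 hx]

theorem cutCap_le_cutCap_union_of_netCutCap_le {E : Finset (α × α)} {c : α × α → ℝ}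
    {T : Finset α} {lam : ℝ} (hlam : 0 ≤ lam) {B : Finset α} (X : Finset α)
    (hB : netCutCap E c T lam B ≤ netCutCap E c T lam (X ∪ B)) :
    cutCap E c B ≤ cutCap E c (X ∪ B) := by
  have hcard : ((T \ (X ∪ B)).card : ℝ) ≤ (T \ B).card := by
    exact_mod_cast card_le_card (sdiff_subset_sdiff subset_rfl subset_union_right)
  unfold netCutCap at hB
  linarith [mul_le_mul_of_nonneg_left hcard hlam]

end Uncrossing

theorem exists_isLeast_rtCutCaps (E : Finset (V × V)) (c : V × V → ℝ) {r t : V}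
    (hrt : r ≠ t) :
    ∃ W : Finset V, t ∈ W ∧ r ∉ W ∧ IsLeast (rtCutCaps E c r t) (cutCap E c W) := by
  obtain ⟨W, hW, hWmin⟩ := exists_min_image
    (univ.filter fun W : Finset V => t ∈ W ∧ r ∉ W) (cutCap E c) ⟨{t}, by simp [hrt]⟩
  simp only [mem_filter, mem_univ, true_and] at hW hWmin
  refine ⟨W, hW.1, hW.2, ⟨W, hW.1, hW.2, rfl⟩, ?_⟩
  rintro _ ⟨W', htW', hrW', rfl⟩
  exact hWmin W' ⟨htW', hrW'⟩

theorem stmt_2_general (E : Finset (V × V)) (c : V × V → ℝ) (hc : ∀ e, 0 ≤ c e)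
    (r : V) (T : Finset V) (lam : ℝ) (hlam : 0 < lam)
    (B : Finset V) (hB : r ∉ B)
    (hmin : ∀ B' : Finset V, r ∉ B' →
      netCutCap E c T lam B ≤ netCutCap E c T lam B') :
    ∀ t ∈ T, t ∈ B →
      ∃ U : Finset V, U ⊆ B ∧ t ∈ U ∧ r ∉ U ∧
        IsLeast {x : ℝ | ∃ W : Finset V, t ∈ W ∧ r ∉ W ∧ x = cutCap E c W}
          (cutCap E c U) := by
  intro t _ htB
  obtain ⟨W, htW, hrW, hW⟩ := exists_isLeast_rtCutCaps E c (ne_of_mem_of_not_mem htB hB).symm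
  have hBW : cutCap E c B ≤ cutCap E c (W ∪ B) :=
    cutCap_le_cutCap_union_of_netCutCap_le hlam.le W (hmin _ (by simp [hrW, hB]))
  exact ⟨W ∩ B, inter_subset_right, mem_inter.2 ⟨htW, htB⟩, fun h => hB (mem_inter.1 h).2,
    isLeast_rtCutCaps_inter hc htW hW htB hB hBW⟩

/-- if `(A, B ∪ {t*})` is a minimum `(r,t*)`-cut in the `(λ,T)`-flow
network, then for every terminal `t ∈ T ∩ B` there is a minimum `(r,t)`-cut of `G`
whose sink component `U` is contained in `B`: `U ⊆ B`, `t ∈ U`, `r ∉ U`, and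
`c(∂⁻U)` is the least capacity of any cut `∂⁻W` with `t ∈ W`, `r ∉ W`. -/
theorem stmt_2 (E : Finset (V × V)) (c : V × V → ℝ) (hc : ∀ e, 0 ≤ c e)
    (r : V) (T : Finset V) (hT : r ∉ T) (lam : ℝ) (hlam : 0 < lam)
    (B : Finset V) (hB : r ∉ B)
    (hmin : ∀ B' : Finset V, r ∉ B' →
      netCutCap E c T lam B ≤ netCutCap E c T lam B') :
    ∀ t ∈ T, t ∈ B →
      ∃ U : Finset V, U ⊆ B ∧ t ∈ U ∧ r ∉ U ∧
        IsLeast {x : ℝ | ∃ W : Finset V, t ∈ W ∧ r ∉ W ∧ x = cutCap E c W}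
          (cutCap E c U) :=
  stmt_2_general E c hc r T lam hlam B hB hmin
end
end

section
/- Shrink lemma: suppose (G,r) is rooted φ-conditioned, and let (A, B ∪ {t*}) be a minimum (r,t*)-cut in the (λ,T)-flow network. Then vol⁻(B) ≤ λ·|T ∩ B| / φ; consequently, the contracted graph G/A has at most λ·|T ∩ B| / φ edges. -/
open Classical Finset
noncomputable section

variable {V : Type*} [Fintype V] [DecidableEq V]

/-- Unweighted in-degree of `v`. -/
def degIn (E : Finset (V × V)) (v : V) : ℕ :=
  (E.filter (fun e => e.2 = v)).card

/-- In-volume of `X`: the sum of unweighted in-degrees over `X`. -/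
def volIn (E : Finset (V × V)) (X : Finset V) : ℕ :=
  ∑ v ∈ X, degIn E v

/-- `(G,r)` is rooted `φ`-conditioned. -/
def RootedConditioned (E : Finset (V × V)) (c : V × V → ℝ) (r : V) (φ : ℝ) : Prop :=
  ∀ U : Finset V, U.Nonempty → r ∉ U → φ * (volIn E U : ℝ) ≤ cutCap E c U

section

omit [Fintype V]

theorem volIn_eq_card_filter (E : Finset (V × V)) (X : Finset V) :
    volIn E X = (E.filter (fun e => e.2 ∈ X)).card := by
  simp only [volIn, degIn, card_filter]
  rw [sum_comm]
  exact sum_congr rfl fun e _ => by simp [eq_comm]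

@[simp]
theorem volIn_empty (E : Finset (V × V)) : volIn E ∅ = 0 := by
  simp [volIn]

@[simp]
theorem cutCap_empty (E : Finset (V × V)) (c : V × V → ℝ) : cutCap E c ∅ = 0 := by
  simp [cutCap, inCut]

theorem RootedConditioned.mul_volIn_le_cutCap {E : Finset (V × V)} {c : V × V → ℝ} {r : V}
    {φ : ℝ} (hcond : RootedConditioned E c r φ) {U : Finset V} (hU : r ∉ U) :
    φ * (volIn E U : ℝ) ≤ cutCap E c U := by
  rcases U.eq_empty_or_nonempty with rfl | hne
  · simp
  · exact hcond U hne hU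

/-- Comparing the cut `B` with the trivial cut `B' = ∅`, which pays `λ` for every terminal. -/
theorem cutCap_le_of_netCutCap_le_empty {E : Finset (V × V)} {c : V × V → ℝ} {T : Finset V}
    {lam : ℝ} {B : Finset V} (h : netCutCap E c T lam B ≤ netCutCap E c T lam ∅) :
    cutCap E c B ≤ lam * ((T ∩ B).card : ℝ) := by
  have hcard : ((T \ B).card : ℝ) + (T ∩ B).card = T.card := by
    exact_mod_cast card_sdiff_add_card_inter T B
  simp only [netCutCap, cutCap_empty, sdiff_empty, zero_add] at h
  linear_combination h - lam * hcard

end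

theorem stmt_7_general (E : Finset (V × V)) (c : V × V → ℝ)
    (r : V) (T : Finset V) (lam φ : ℝ) (hφ : 0 < φ)
    (hcond : RootedConditioned E c r φ)
    (B : Finset V) (hB : r ∉ B)
    (hmin : ∀ B' : Finset V, r ∉ B' →
      netCutCap E c T lam B ≤ netCutCap E c T lam B') :
    (volIn E B : ℝ) ≤ lam * ((T ∩ B).card : ℝ) / φ ∧
      ((E.filter (fun e => e.2 ∈ B)).card : ℝ) ≤ lam * ((T ∩ B).card : ℝ) / φ := by
  have hvol : (volIn E B : ℝ) ≤ lam * ((T ∩ B).card : ℝ) / φ := by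
    rw [le_div_iff₀' hφ]
    exact (hcond.mul_volIn_le_cutCap hB).trans
      (cutCap_le_of_netCutCap_le_empty (hmin ∅ (notMem_empty r)))
  exact ⟨hvol, volIn_eq_card_filter E B ▸ hvol⟩

/-- shrink lemma: if `(G,r)` is rooted `φ`-conditioned and
`(A, B ∪ {t*})` is a minimum `(r,t*)`-cut in the `(λ,T)`-flow network, then
`vol⁻(B) ≤ λ·|T ∩ B|/φ`; consequently the contracted graph `G/A`, which has at most
`vol⁻(B)` edges (its edges are the arcs of `G` with head in `B`), has at most
`λ·|T ∩ B|/φ` edges. -/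
theorem stmt_7 (E : Finset (V × V)) (c : V × V → ℝ) (hc : ∀ e, 0 ≤ c e)
    (r : V) (T : Finset V) (hT : r ∉ T) (lam φ : ℝ) (hlam : 0 < lam) (hφ : 0 < φ)
    (hcond : RootedConditioned E c r φ)
    (B : Finset V) (hB : r ∉ B)
    (hmin : ∀ B' : Finset V, r ∉ B' →
      netCutCap E c T lam B ≤ netCutCap E c T lam B') :
    (volIn E B : ℝ) ≤ lam * ((T ∩ B).card : ℝ) / φ ∧
      ((E.filter (fun e => e.2 ∈ B)).card : ℝ) ≤ lam * ((T ∩ B).card : ℝ) / φ :=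
  stmt_7_general E c r T lam φ hφ hcond B hB hmin
end
end

section
/- Pushing back flow preserves cut saturation: let f be a maximum (r,t*)-flow in the (λ,T)-flow network with minimum cut (A, B ∪ {t*}). The restriction of f to G is an (r, T)-preflow in which each t ∈ T ∩ A has excess λ. The flow h obtained by canceling (pushing back to r) the excess at each t ∈ T ∩ A still saturates every arc from A to B and carries zero flow on every arc from B to A; hence h is a maximum (r, T ∩ B)-flow in G of value c(A→B). -/
open Classical Finset
noncomputable section

variable {V : Type*} [Fintype V] [DecidableEq V]

section FlowDefs

variable {α : Type*} [Fintype α] [DecidableEq α]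

/-- Total flow of `f` into `v` along arcs of `F`. -/
def flowIn (F : Finset (α × α)) (f : α × α → ℝ) (v : α) : ℝ :=
  ∑ e ∈ F.filter (fun e => e.2 = v), f e

/-- Total flow of `f` out of `v` along arcs of `F`. -/
def flowOut (F : Finset (α × α)) (f : α × α → ℝ) (v : α) : ℝ :=
  ∑ e ∈ F.filter (fun e => e.1 = v), f e

/-- Excess of `f` at `v`: inflow minus outflow. -/
def excess (F : Finset (α × α)) (f : α × α → ℝ) (v : α) : ℝ :=
  flowIn F f v - flowOut F f v

/-- `f` respects capacities `cc` and is supported on `F`. -/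
def Feasible (F : Finset (α × α)) (cc : α × α → ℝ) (f : α × α → ℝ) : Prop :=
  (∀ e ∈ F, 0 ≤ f e ∧ f e ≤ cc e) ∧ ∀ e ∉ F, f e = 0

/-- An `(s, S)`-preflow: feasible, with nonnegative excess at every non-source vertex. -/
def IsPreflow (F : Finset (α × α)) (cc : α × α → ℝ) (s : α) (f : α × α → ℝ) : Prop :=
  Feasible F cc f ∧ ∀ v, v ≠ s → 0 ≤ excess F f v

/-- A flow from source `s` to the set of sinks `S`: feasible, flow conservation at
every vertex other than `s` and the sinks, and nonnegative excess at each sink. -/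
def IsFlow (F : Finset (α × α)) (cc : α × α → ℝ) (s : α) (S : Finset α)
    (f : α × α → ℝ) : Prop :=
  Feasible F cc f ∧ (∀ v, v ≠ s → v ∉ S → excess F f v = 0) ∧
    ∀ v ∈ S, 0 ≤ excess F f v

/-- The value of a flow with source `s`: net flow out of `s`. -/
def flowValue (F : Finset (α × α)) (f : α × α → ℝ) (s : α) : ℝ :=
  flowOut F f s - flowIn F f s

end FlowDefs

/-- The arc set of the `(λ,T)`-flow network: the arcs of `G` together with an arc
`(t, t*)` for each terminal `t ∈ T`, where the super-sink `t*` is `none : Option V`. -/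
def netE (E : Finset (V × V)) (T : Finset V) : Finset (Option V × Option V) :=
  E.image (fun e => ((some e.1 : Option V), (some e.2 : Option V))) ∪
    T.image (fun t => ((some t : Option V), (none : Option V)))

/-- Capacities in the `(λ,T)`-flow network: arcs of `G` keep their capacity, and each
auxiliary arc `(t, t*)` has capacity `lam`. -/
def netCap (c : V × V → ℝ) (lam : ℝ) : Option V × Option V → ℝ
  | (some u, some v) => c (u, v)
  | (some _, none) => lam
  | _ => 0

/-!
A maximum flow saturates every minimum cut: if the super-sink were reachable in the residual
graph, augmenting along a residual walk would increase the flow value, so the value equals the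
capacity of the residual cut, hence (by minimality of `B`) that of `(A, B ∪ {t*})`. Restricted
to `G`, the flow is then a preflow with excess only at `r` and at the terminals, and nothing
flows from `B` into `A`. Among the flows below this preflow that agree with it off the arcs
inside `A` and keep nonnegative excess on `A \ {r}`, one of least total flow exists by
compactness; it has no excess left on `A \ {r}`, since otherwise the flow on an arc entering an
excess vertex could be lowered. The arcs between `A` and `B` are never touched, so the cut stays
saturated and the resulting flow attains the cut capacity.
-/

section Flows

variable {α : Type*} {F : Finset (α × α)} {cc f g : α × α → ℝ}

lemma Feasible.nonneg (hf : Feasible F cc f) (e : α × α) : 0 ≤ f e := by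
  by_cases he : e ∈ F
  · exact (hf.1 e he).1
  · exact (hf.2 e he).ge

lemma Feasible.of_le (hf : Feasible F cc f) (hg0 : ∀ e, 0 ≤ g e) (hgf : ∀ e, g e ≤ f e) :
    Feasible F cc g :=
  ⟨fun e he => ⟨hg0 e, (hgf e).trans (hf.1 e he).2⟩,
    fun e he => le_antisymm ((hgf e).trans (hf.2 e he).le) (hg0 e)⟩

variable [DecidableEq α]

@[simp]
lemma mem_inCut {X : Finset α} {e : α × α} :
    e ∈ inCut F X ↔ e ∈ F ∧ e.1 ∉ X ∧ e.2 ∈ X :=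
  mem_filter

lemma continuous_excess (F : Finset (α × α)) (v : α) :
    Continuous fun f : α × α → ℝ => excess F f v := by
  unfold excess flowIn flowOut
  fun_prop

lemma excess_add (F : Finset (α × α)) (f g : α × α → ℝ) (v : α) :
    excess F (f + g) v = excess F f v + excess F g v := by
  simp only [excess, flowIn, flowOut, Pi.add_apply, sum_add_distrib]
  ring

lemma excess_single {e : α × α} (he : e ∈ F) (t : ℝ) (v : α) :
    excess F (Pi.single e t) v = (if v = e.2 then t else 0) - (if v = e.1 then t else 0) := by
  simp only [excess, flowIn, flowOut, sum_pi_single', mem_filter, he, true_and, eq_comm]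

lemma excess_congr {v : α} (h : ∀ e ∈ F, (e.1 = v ∨ e.2 = v) → g e = f e) :
    excess F g v = excess F f v := by
  unfold excess flowIn flowOut
  congr 1
  · exact sum_congr rfl fun e he => h e (mem_filter.1 he).1 (Or.inr (mem_filter.1 he).2)
  · exact sum_congr rfl fun e he => h e (mem_filter.1 he).1 (Or.inl (mem_filter.1 he).2)

lemma sum_excess [Fintype α] (F : Finset (α × α)) (f : α × α → ℝ) (X : Finset α) :
    ∑ v ∈ X, excess F f v = ∑ e ∈ inCut F X, f e - ∑ e ∈ inCut F Xᶜ, f e := by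
  simp only [excess, flowIn, flowOut, inCut, sum_sub_distrib, sum_filter, mem_compl, not_not]
  rw [sum_comm, sum_comm (s := X), ← sum_sub_distrib, ← sum_sub_distrib]
  refine sum_congr rfl fun e _ => ?_
  rw [sum_ite_eq, sum_ite_eq]
  by_cases h1 : e.1 ∈ X <;> by_cases h2 : e.2 ∈ X <;> simp [h1, h2]

lemma flowValue_eq_neg_excess (F : Finset (α × α)) (f : α × α → ℝ) (s : α) :
    flowValue F f s = -excess F f s := by
  rw [flowValue, excess, neg_sub]

lemma flowValue_eq_sum_inCut_sub [Fintype α] {s : α} {S Y : Finset α}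
    (hf : IsFlow F cc s S f) (hsY : s ∉ Y) (hSY : S ⊆ Y) :
    flowValue F f s = ∑ e ∈ inCut F Y, f e - ∑ e ∈ inCut F Yᶜ, f e := by
  have hsum : ∑ v ∈ Yᶜ, excess F f v = excess F f s :=
    sum_eq_single_of_mem s (mem_compl.2 hsY) fun v hv hvs =>
      hf.2.1 v hvs fun hvS => mem_compl.1 hv (hSY hvS)
  rw [sum_excess, compl_compl] at hsum
  rw [flowValue_eq_neg_excess, ← hsum, neg_sub]

lemma flowValue_le_cutCap [Fintype α] {s : α} {S Y : Finset α}
    (hf : IsFlow F cc s S f) (hsY : s ∉ Y) (hSY : S ⊆ Y) :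
    flowValue F f s ≤ cutCap F cc Y := by
  rw [flowValue_eq_sum_inCut_sub hf hsY hSY, cutCap]
  have hout : ∑ e ∈ inCut F Y, f e ≤ ∑ e ∈ inCut F Y, cc e :=
    sum_le_sum fun e he => (hf.1.1 e (mem_inCut.1 he).1).2
  have hin : 0 ≤ ∑ e ∈ inCut F Yᶜ, f e := sum_nonneg fun e _ => hf.1.nonneg e
  linarith

lemma flowValue_eq_cutCap_iff [Fintype α] {s : α} {S Y : Finset α}
    (hf : IsFlow F cc s S f) (hsY : s ∉ Y) (hSY : S ⊆ Y) :
    flowValue F f s = cutCap F cc Y ↔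
      (∀ e ∈ inCut F Y, f e = cc e) ∧ ∀ e ∈ inCut F Yᶜ, f e = 0 := by
  have hout : ∀ e ∈ inCut F Y, f e ≤ cc e := fun e he => (hf.1.1 e (mem_inCut.1 he).1).2
  have hin : ∀ e ∈ inCut F Yᶜ, 0 ≤ f e := fun e _ => hf.1.nonneg e
  rw [← sum_eq_sum_iff_of_le hout, ← sum_eq_zero_iff_of_nonneg hin,
    flowValue_eq_sum_inCut_sub hf hsY hSY, cutCap]
  have := sum_le_sum hout
  have := sum_nonneg hin
  constructor
  · intro h; constructor <;> linarith
  · rintro ⟨h1, h2⟩; rw [h1, h2, sub_zero]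

end Flows

section Augment

variable {α : Type*} [DecidableEq α] {F : Finset (α × α)} {cc f g : α × α → ℝ}

def ResidualAdj (F : Finset (α × α)) (cc f : α × α → ℝ) (u w : α) : Prop :=
  ((u, w) ∈ F ∧ f (u, w) < cc (u, w)) ∨ ((w, u) ∈ F ∧ 0 < f (w, u))

lemma Feasible.add_single (hg : Feasible F cc g) {a : α × α} (ha : a ∈ F) {t : ℝ}
    (h0 : 0 ≤ g a + t) (h1 : g a + t ≤ cc a) :
    Feasible F cc (g + Pi.single a t : α × α → ℝ) := by
  refine ⟨fun e he => ?_, fun e he => ?_⟩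
  · by_cases hea : e = a
    · subst hea; simpa using ⟨h0, h1⟩
    · simpa [Pi.single_apply, hea] using hg.1 e he
  · have hea : e ≠ a := fun h => he (h ▸ ha)
    simpa [Pi.single_apply, hea] using hg.2 e he

lemma abs_add_single_sub_le {δ : ℝ} (hclose : ∀ e, |g e - f e| ≤ δ) (a : α × α) (t : ℝ)
    (e : α × α) : |(g + Pi.single a t : α × α → ℝ) e - f e| ≤ δ + |t| := by
  by_cases hea : e = a
  · subst hea
    simpa [add_sub_right_comm] using (abs_add_le (g e - f e) t).trans (by linarith [hclose e])
  · simpa [Pi.single_apply, hea] using (hclose e).trans (le_add_of_nonneg_right (abs_nonneg t))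

lemma excess_add_single {a : α × α} (ha : a ∈ F) (t : ℝ) (v : α) :
    excess F (g + Pi.single a t) v =
      excess F g v + ((if v = a.2 then t else 0) - (if v = a.1 then t else 0)) := by
  rw [excess_add, excess_single ha]

/-- The walk may use an arc several times, so the amount `ε` is chosen so small that every
intermediate flow stays within `δ` of `f`. -/
lemma exists_augment_of_reflTransGen (hf : Feasible F cc f) {s v : α}
    (hsv : Relation.ReflTransGen (ResidualAdj F cc f) s v) {δ : ℝ} (hδ : 0 < δ) :
    ∃ ε, 0 < ε ∧ ε ≤ δ ∧ ∃ g, Feasible F cc g ∧ (∀ e, |g e - f e| ≤ δ) ∧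
      ∀ x, excess F g x =
        excess F f x + ((if x = v then ε else 0) - (if x = s then ε else 0)) := by
  induction hsv generalizing δ with
  | refl => exact ⟨δ, hδ, le_rfl, f, hf, by simp [hδ.le], by simp⟩
  | @tail u w _ huw ih =>
    rcases huw with ⟨ha, hslack⟩ | ⟨ha, hpos⟩
    · obtain ⟨ε, hε, hεδ, g, hg, hclose, hex⟩ :=
        ih (δ := min (δ / 2) ((cc (u, w) - f (u, w)) / 2)) (by apply lt_min <;> linarith)
      have h1 := min_le_left (δ / 2) ((cc (u, w) - f (u, w)) / 2)
      have h2 := min_le_right (δ / 2) ((cc (u, w) - f (u, w)) / 2)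
      have hguw := abs_le.1 (hclose (u, w))
      refine ⟨ε, hε, by linarith, g + Pi.single (u, w) ε,
        hg.add_single ha (by linarith [hg.nonneg (u, w)]) (by linarith),
        fun e => (abs_add_single_sub_le hclose _ _ e).trans ?_, fun x => ?_⟩
      · rw [abs_of_pos hε]; linarith
      · rw [excess_add_single ha, hex]
        split_ifs <;> ring
    · obtain ⟨ε, hε, hεδ, g, hg, hclose, hex⟩ :=
        ih (δ := min (δ / 2) (f (w, u) / 2)) (by apply lt_min <;> linarith)
      have h1 := min_le_left (δ / 2) (f (w, u) / 2)
      have h2 := min_le_right (δ / 2) (f (w, u) / 2)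
      have hgwu := abs_le.1 (hclose (w, u))
      refine ⟨ε, hε, by linarith, g + Pi.single (w, u) (-ε),
        hg.add_single ha (by linarith) (by linarith [(hg.1 _ ha).2]),
        fun e => (abs_add_single_sub_le hclose _ _ e).trans ?_, fun x => ?_⟩
      · rw [abs_neg, abs_of_pos hε]; linarith
      · rw [excess_add_single ha, hex]
        split_ifs <;> ring

end Augment

section MaxFlowMinCut

variable {α : Type*} [DecidableEq α] {F : Finset (α × α)} {cc f : α × α → ℝ}

lemma not_reflTransGen_residualAdj_of_max {s : α} {S : Finset α} (hsS : s ∉ S)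
    (hf : IsFlow F cc s S f)
    (hmax : ∀ f', IsFlow F cc s S f' → flowValue F f' s ≤ flowValue F f s) {t : α}
    (ht : t ∈ S) : ¬Relation.ReflTransGen (ResidualAdj F cc f) s t := by
  intro hst
  have hts : t ≠ s := fun h => hsS (h ▸ ht)
  obtain ⟨ε, hε, -, g, hg, -, hex⟩ := exists_augment_of_reflTransGen hf.1 hst one_pos
  have hgflow : IsFlow F cc s S g := by
    refine ⟨hg, fun x hxs hxS => ?_, fun x hx => ?_⟩
    · have hxt : x ≠ t := fun h => hxS (h ▸ ht)
      simp [hex, hf.2.1 x hxs hxS, hxs, hxt]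
    · have hxs : x ≠ s := fun h => hsS (h ▸ hx)
      have := hf.2.2 x hx
      rw [hex]
      split_ifs <;> linarith
  have := hmax g hgflow
  rw [flowValue_eq_neg_excess, flowValue_eq_neg_excess, hex] at this
  simp only [if_true, hts.symm, if_false] at this
  linarith

lemma exists_flowValue_eq_cutCap_of_max [Fintype α] {s : α} {S : Finset α} (hsS : s ∉ S)
    (hf : IsFlow F cc s S f)
    (hmax : ∀ f', IsFlow F cc s S f' → flowValue F f' s ≤ flowValue F f s) :
    ∃ Y : Finset α, s ∉ Y ∧ S ⊆ Y ∧ flowValue F f s = cutCap F cc Y := by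
  set R := univ.filter (Relation.ReflTransGen (ResidualAdj F cc f) s)
  have hsR : s ∉ Rᶜ := by simpa [R] using Relation.ReflTransGen.refl
  have hSR : S ⊆ Rᶜ := fun t ht => by
    simpa [R] using not_reflTransGen_residualAdj_of_max hsS hf hmax ht
  refine ⟨Rᶜ, hsR, hSR,
    (flowValue_eq_cutCap_iff hf hsR hSR).2 ⟨fun e he => ?_, fun e he => ?_⟩⟩
  · simp only [mem_inCut, mem_compl, not_not, R, mem_filter, mem_univ, true_and] at he
    refine (lt_or_eq_of_le (hf.1.1 e he.1).2).resolve_left fun hlt => he.2.2 ?_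
    exact he.2.1.tail (Or.inl ⟨he.1, hlt⟩)
  · simp only [mem_inCut, compl_compl, R, mem_filter, mem_univ, true_and] at he
    refine ((lt_or_eq_of_le (hf.1.nonneg e)).resolve_left fun hpos => he.2.1 ?_).symm
    exact he.2.2.tail (Or.inr ⟨he.1, hpos⟩)

end MaxFlowMinCut

section Cancel

variable {α : Type*} [DecidableEq α] {F : Finset (α × α)} {cc f g : α × α → ℝ}
  {U : Finset α} {s : α}

def preflowsBelow (F : Finset (α × α)) (f : α × α → ℝ) (U : Finset α) (s : α) :
    Set (α × α → ℝ) :=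
  {g | (∀ e, 0 ≤ g e ∧ g e ≤ f e) ∧ (∀ e, ¬(e.1 ∈ U ∧ e.2 ∈ U) → g e = f e) ∧
    ∀ v ∈ U, v ≠ s → 0 ≤ excess F g v}

lemma isCompact_preflowsBelow : IsCompact (preflowsBelow F f U s) := by
  have hclosed : IsClosed (preflowsBelow F f U s) := by
    simp only [preflowsBelow, Set.ofPred_and, Set.ofPred_forall]
    refine .inter (isClosed_iInter fun e => ?_) (.inter (isClosed_iInter fun e => ?_)
      (isClosed_iInter fun v => isClosed_iInter fun _ => isClosed_iInter fun _ => ?_))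
    · exact (isClosed_le continuous_const (continuous_apply e)).inter
        (isClosed_le (continuous_apply e) continuous_const)
    · exact isClosed_iInter fun _ => isClosed_eq (continuous_apply e) continuous_const
    · exact isClosed_le continuous_const (continuous_excess F v)
  exact isCompact_Icc.of_isClosed_subset hclosed fun g hg =>
    ⟨fun e => (hg.1 e).1, fun e => (hg.1 e).2⟩

lemma exists_sum_lt_of_excess_pos (hin : ∀ e ∈ inCut F U, f e = 0)
    (hg : g ∈ preflowsBelow F f U s) {v : α} (hvU : v ∈ U) (hvs : v ≠ s)
    (hv : 0 < excess F g v) :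
    ∃ g' ∈ preflowsBelow F f U s, ∑ e ∈ F, g' e < ∑ e ∈ F, g e := by
  obtain ⟨hgf, hgout, hgex⟩ := hg
  have hflowIn : 0 < flowIn F g v := by
    have : 0 ≤ flowOut F g v := sum_nonneg fun e _ => (hgf e).1
    rw [excess] at hv; linarith
  obtain ⟨a, ha, hga⟩ :=
    exists_lt_of_sum_lt (s := F.filter (·.2 = v)) (f := fun _ => 0) (g := g)
      (by simpa [flowIn] using hflowIn)
  obtain ⟨haF, rfl⟩ := mem_filter.1 ha
  have ha1 : a.1 ∈ U := by
    by_contra h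
    have : g a = 0 := (hgout a (by tauto)).trans (hin a (mem_inCut.2 ⟨haF, h, hvU⟩))
    exact hga.ne' this
  set ε := min (g a) (excess F g a.2)
  have hε : 0 < ε := lt_min hga hv
  have hεa : ε ≤ g a := min_le_left _ _
  have hεv : ε ≤ excess F g a.2 := min_le_right _ _
  refine ⟨g + Pi.single a (-ε), ⟨fun e => ?_, fun e he => ?_, fun x hxU hxs => ?_⟩, ?_⟩
  · by_cases hea : e = a
    · subst hea
      simp only [Pi.add_apply, Pi.single_eq_same]
      constructor <;> linarith [(hgf e).2]
    · simpa [Pi.single_apply, hea] using hgf e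
  · have hea : e ≠ a := by rintro rfl; exact he ⟨ha1, hvU⟩
    simpa [Pi.single_apply, hea] using hgout e he
  · rw [excess_add_single haF]
    have := hgex x hxU hxs
    split_ifs with h1 h2 <;> first | linarith | (subst h1; linarith)
  · simp only [Pi.add_apply, sum_add_distrib, sum_pi_single', if_pos haF]
    linarith

lemma exists_excess_eq_zero [Fintype α] (hf : Feasible F cc f)
    (hpre : ∀ v ∈ U, v ≠ s → 0 ≤ excess F f v) (hin : ∀ e ∈ inCut F U, f e = 0) :
    ∃ g, Feasible F cc g ∧ (∀ e, ¬(e.1 ∈ U ∧ e.2 ∈ U) → g e = f e) ∧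
      ∀ v ∈ U, v ≠ s → excess F g v = 0 := by
  have hfS : f ∈ preflowsBelow F f U s :=
    ⟨fun e => ⟨hf.nonneg e, le_rfl⟩, fun _ _ => rfl, hpre⟩
  obtain ⟨g, hg, hmin⟩ := isCompact_preflowsBelow.exists_isMinOn ⟨f, hfS⟩
    (continuous_finsetSum F fun e _ => continuous_apply e).continuousOn
  refine ⟨g, hf.of_le (fun e => (hg.1 e).1) (fun e => (hg.1 e).2), hg.2.1, fun v hvU hvs => ?_⟩
  refine le_antisymm (not_lt.1 fun hv => ?_) (hg.2.2 v hvU hvs)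
  obtain ⟨g', hg', hlt⟩ := exists_sum_lt_of_excess_pos hin hg hvU hvs hv
  exact not_le.2 hlt (hmin hg')

end Cancel

section PushBack

variable {α : Type*} [Fintype α] [DecidableEq α] {F : Finset (α × α)}
  {cc g : α × α → ℝ} {s : α} {S Y : Finset α}

lemma exists_isFlow_flowValue_eq_cutCap (hg : IsPreflow F cc s g) (hsY : s ∉ Y)
    (hcons : ∀ v ∈ Y, v ∉ S → excess F g v = 0)
    (hsat : ∀ e ∈ F, e.1 ∉ Y → e.2 ∈ Y → g e = cc e)
    (hzero : ∀ e ∈ F, e.1 ∈ Y → e.2 ∉ Y → g e = 0) :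
    ∃ h : α × α → ℝ, IsFlow F cc s (S ∩ Y) h ∧
      (∀ e ∈ F, e.1 ∉ Y → e.2 ∈ Y → h e = cc e) ∧
      (∀ e ∈ F, e.1 ∈ Y → e.2 ∉ Y → h e = 0) ∧
      flowValue F h s = cutCap F cc Y ∧
      ∀ h', IsFlow F cc s (S ∩ Y) h' → flowValue F h' s ≤ flowValue F h s := by
  obtain ⟨h, hh, hout, hA⟩ := exists_excess_eq_zero (U := Yᶜ) hg.1
    (fun v _ hvs => hg.2 v hvs) fun e he => by
      simp only [mem_inCut, mem_compl, not_not] at he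
      exact hzero e he.1 he.2.1 he.2.2
  have hsame : ∀ e, e.1 ∈ Y ∨ e.2 ∈ Y → h e = g e := fun e he =>
    hout e (by simpa [or_iff_not_imp_left] using he)
  have hY : ∀ v ∈ Y, excess F h v = excess F g v := fun v hv =>
    excess_congr fun e _ he => hsame e (by rcases he with rfl | rfl <;> simp [hv])
  have hflow : IsFlow F cc s (S ∩ Y) h := by
    refine ⟨hh, fun v hvs hvSY => ?_, fun v hv => ?_⟩
    · by_cases hvY : v ∈ Y
      · rw [hY v hvY, hcons v hvY fun hvS => hvSY (mem_inter.2 ⟨hvS, hvY⟩)]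
      · exact hA v (mem_compl.2 hvY) hvs
    · have hvY := (mem_inter.1 hv).2
      rw [hY v hvY]
      exact hg.2 v fun h => hsY (h ▸ hvY)
  have hhsat : ∀ e ∈ F, e.1 ∉ Y → e.2 ∈ Y → h e = cc e := fun e he h1 h2 =>
    (hsame e (.inr h2)).trans (hsat e he h1 h2)
  have hhzero : ∀ e ∈ F, e.1 ∈ Y → e.2 ∉ Y → h e = 0 := fun e he h1 h2 =>
    (hsame e (.inl h1)).trans (hzero e he h1 h2)
  have hval : flowValue F h s = cutCap F cc Y :=
    (flowValue_eq_cutCap_iff hflow hsY inter_subset_right).2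
      ⟨fun e he => hhsat e (mem_inCut.1 he).1 (mem_inCut.1 he).2.1 (mem_inCut.1 he).2.2,
        fun e he => by
          simp only [mem_inCut, mem_compl, not_not] at he
          exact hhzero e he.1 he.2.1 he.2.2⟩
  exact ⟨h, hflow, hhsat, hhzero, hval,
    fun h' hh' => hval ▸ flowValue_le_cutCap hh' hsY inter_subset_right⟩

end PushBack

section Network

variable {W : Type*} [DecidableEq W] {E : Finset (W × W)} {T : Finset W}

lemma sum_netE (E : Finset (W × W)) (T : Finset W) (φ : Option W × Option W → ℝ) :
    ∑ e ∈ netE E T, φ e =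
      ∑ e ∈ E, φ (some e.1, some e.2) + ∑ t ∈ T, φ (some t, none) := by
  rw [netE, sum_union, sum_image, sum_image]
  · intro a _ b _ h; simpa using h
  · intro a _ b _ h; simpa [Prod.ext_iff] using h
  · rw [disjoint_left]
    rintro _ h1 h2
    obtain ⟨_, _, rfl⟩ := mem_image.1 h1
    obtain ⟨_, _, h⟩ := mem_image.1 h2
    simp at h

@[simp]
lemma some_some_mem_netE {a b : W} : (some a, some b) ∈ netE E T ↔ (a, b) ∈ E := by
  simp [netE]

@[simp]
lemma some_none_mem_netE {t : W} : (some t, none) ∈ netE E T ↔ t ∈ T := by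
  simp [netE]

lemma excess_restrict_netE (E : Finset (W × W)) (T : Finset W) (f : Option W × Option W → ℝ)
    (v : W) : excess E (fun e => f (some e.1, some e.2)) v =
      excess (netE E T) f (some v) + if v ∈ T then f (some v, none) else 0 := by
  simp only [excess, flowIn, flowOut, sum_filter, sum_netE]
  simp [sum_ite_eq']
  ring

lemma cutCap_netE_insertNone (E : Finset (W × W)) (c : W × W → ℝ) (T : Finset W) (lam : ℝ)
    (B : Finset W) : cutCap (netE E T) (netCap c lam) (insertNone B) = netCutCap E c T lam B := by
  simp only [cutCap, netCutCap, inCut, sum_filter, sum_netE, some_mem_insertNone,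
    none_mem_insertNone]
  simp [netCap, sdiff_eq_filter, sum_ite, mul_comm]

end Network

section NetworkCut

variable {W : Type*} [Fintype W] [DecidableEq W] {E : Finset (W × W)} {T : Finset W}
  {c : W × W → ℝ} {lam : ℝ} {r : W} {B : Finset W} {f : Option W × Option W → ℝ}

lemma netE_flow_saturates_minCut (hB : r ∉ B)
    (hmin : ∀ B' : Finset W, r ∉ B' → netCutCap E c T lam B ≤ netCutCap E c T lam B')
    (hf : IsFlow (netE E T) (netCap c lam) (some r) {none} f)
    (hfmax : ∀ f', IsFlow (netE E T) (netCap c lam) (some r) {none} f' →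
      flowValue (netE E T) f' (some r) ≤ flowValue (netE E T) f (some r)) :
    (∀ e ∈ E, e.1 ∉ B → e.2 ∈ B → f (some e.1, some e.2) = c e) ∧
      (∀ t ∈ T, t ∉ B → f (some t, none) = lam) ∧
      ∀ e ∈ E, e.1 ∈ B → e.2 ∉ B → f (some e.1, some e.2) = 0 := by
  have hrB : some r ∉ insertNone B := by simpa using hB
  have hnB : {none} ⊆ insertNone B := by simp
  have hval : flowValue (netE E T) f (some r) =
      cutCap (netE E T) (netCap c lam) (insertNone B) := by
    refine le_antisymm (flowValue_le_cutCap hf hrB hnB) ?_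
    obtain ⟨Y, hrY, hnY, hY⟩ := exists_flowValue_eq_cutCap_of_max (by simp) hf hfmax
    rw [hY, ← insert_eq_of_mem (singleton_subset_iff.1 hnY), ← insertNone_eraseNone,
      cutCap_netE_insertNone, cutCap_netE_insertNone]
    exact hmin _ (by simpa using hrY)
  obtain ⟨hsat, hzero⟩ := (flowValue_eq_cutCap_iff hf hrB hnB).1 hval
  exact ⟨fun e he h1 h2 => hsat (some e.1, some e.2) (by simp [he, h1, h2]),
    fun t ht htB => hsat (some t, none) (by simp [ht, htB]),
    fun e he h1 h2 => hzero (some e.1, some e.2) (by simp [he, h1, h2])⟩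

end NetworkCut

theorem stmt_9_general (E : Finset (V × V)) (c : V × V → ℝ)
    (r : V) (T : Finset V) (hT : r ∉ T) (lam : ℝ)
    (B : Finset V) (hB : r ∉ B)
    (hmin : ∀ B' : Finset V, r ∉ B' →
      netCutCap E c T lam B ≤ netCutCap E c T lam B')
    (f : Option V × Option V → ℝ)
    (hf : IsFlow (netE E T) (netCap c lam) (some r) {none} f)
    (hfmax : ∀ f', IsFlow (netE E T) (netCap c lam) (some r) {none} f' →
      flowValue (netE E T) f' (some r) ≤ flowValue (netE E T) f (some r)) :
    -- the restriction of f to G is an (r,T)-preflow with excess λ at each t ∈ T ∩ A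
    (IsPreflow E c r (fun e => f (some e.1, some e.2)) ∧
      ∀ t ∈ T, t ∉ B → excess E (fun e => f (some e.1, some e.2)) t = lam) ∧
    -- the pushed-back flow h
    (∃ h : V × V → ℝ,
      IsFlow E c r (T ∩ B) h ∧
      (∀ e ∈ E, e.1 ∉ B → e.2 ∈ B → h e = c e) ∧
      (∀ e ∈ E, e.1 ∈ B → e.2 ∉ B → h e = 0) ∧
      flowValue E h r = cutCap E c B ∧
      ∀ h', IsFlow E c r (T ∩ B) h' → flowValue E h' r ≤ flowValue E h r) := by
  obtain ⟨hsat, hsatT, hzero⟩ := netE_flow_saturates_minCut hB hmin hf hfmax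
  have hexcess : ∀ v, v ≠ r → excess E (fun e => f (some e.1, some e.2)) v =
      if v ∈ T then f (some v, none) else 0 := fun v hv => by
    rw [excess_restrict_netE E T, hf.2.1 _ (by simpa using hv) (by simp), zero_add]
  have hpre : IsPreflow E c r (fun e => f (some e.1, some e.2)) :=
    ⟨⟨fun e he => hf.1.1 _ (by simpa using he), fun e he => hf.1.2 _ (by simpa using he)⟩,
      fun v hv => by rw [hexcess v hv]; split_ifs <;> simp [hf.1.nonneg]⟩
  refine ⟨⟨hpre, fun t ht htB => ?_⟩, exists_isFlow_flowValue_eq_cutCap hpre hB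
    (fun v hvB hvT => by rw [hexcess v (ne_of_mem_of_not_mem hvB hB), if_neg hvT]) hsat hzero⟩
  rw [hexcess t (ne_of_mem_of_not_mem ht hT), if_pos ht, hsatT t ht htB]

/-- let `f` be a maximum `(r,t*)`-flow in the `(λ,T)`-flow network with
minimum `(r,t*)`-cut `(A, B ∪ {t*})`.  Then the restriction `fG` of `f` to `G` is an
`(r,T)`-preflow in which each saturated terminal `t ∈ T ∩ A` has excess `λ`; and
there is a flow `h` (obtained by pushing the excess at each `t ∈ T ∩ A` back to `r`)
that saturates every arc from `A` to `B`, carries zero flow on every arc from `B` to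
`A`, and hence is a maximum `(r, T ∩ B)`-flow in `G` of value `c(A→B)`. -/
theorem stmt_9 (E : Finset (V × V)) (c : V × V → ℝ) (hc : ∀ e, 0 ≤ c e)
    (r : V) (T : Finset V) (hT : r ∉ T) (lam : ℝ) (hlam : 0 < lam)
    (B : Finset V) (hB : r ∉ B)
    (hmin : ∀ B' : Finset V, r ∉ B' →
      netCutCap E c T lam B ≤ netCutCap E c T lam B')
    (f : Option V × Option V → ℝ)
    (hf : IsFlow (netE E T) (netCap c lam) (some r) {none} f)
    (hfmax : ∀ f', IsFlow (netE E T) (netCap c lam) (some r) {none} f' →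
      flowValue (netE E T) f' (some r) ≤ flowValue (netE E T) f (some r)) :
    -- the restriction of f to G is an (r,T)-preflow with excess λ at each t ∈ T ∩ A
    (IsPreflow E c r (fun e => f (some e.1, some e.2)) ∧
      ∀ t ∈ T, t ∉ B → excess E (fun e => f (some e.1, some e.2)) t = lam) ∧
    -- the pushed-back flow h
    (∃ h : V × V → ℝ,
      IsFlow E c r (T ∩ B) h ∧
      (∀ e ∈ E, e.1 ∉ B → e.2 ∈ B → h e = c e) ∧
      (∀ e ∈ E, e.1 ∈ B → e.2 ∉ B → h e = 0) ∧
      flowValue E h r = cutCap E c B ∧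
      ∀ h', IsFlow E c r (T ∩ B) h' → flowValue E h' r ≤ flowValue E h r) :=
  stmt_9_general E c r T hT lam B hB hmin f hf hfmax
end
end

section
/- Correspondence between vertex cuts and finite edge cuts in the split graph: let G be a directed graph with vertex capacities c : V → ℝ≥0, and let H be the split graph where each vertex v becomes an arc (v_in, v_out) of capacity c(v) and each arc (u,v) becomes (u_out, v_in) of capacity ∞. Then for r, t ∈ V with t not an out-neighbor of r, every finite-capacity (r_out, t_in)-edge cut in H has capacity at least the minimum (r,t)-vertex cut capacity in G, and the minimum (r_out,t_in)-edge cut capacity in H equals the minimum (r,t)-vertex cut capacity in G. -/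
/-!
A finite cut `Z` of the split graph is crossed only by split arcs `(v_in, v_out)`, and the
vertices `v` of these arcs form an `(r,t)`-vertex cut of `G`: along an `r`–`t` path avoiding
them, `v_out` would stay outside `Z` while `t_in` lies in `Z`, so some infinite arc would
enter `Z`. Conversely, if `R` is the set of vertices reachable from `r` without meeting a
vertex cut `X`, the sink side `{v_out : v ∉ R} ∪ {v_in : v ∉ R ∪ X}` is a finite cut crossed
by exactly the split arcs of `X`, so its capacity is that of `X`; minimality of `X` gives the
lower bound for every finite cut.
-/

open Classical Finset
noncomputable section

variable {V : Type*} [Fintype V] [DecidableEq V]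

/-- One step of a directed walk avoiding the vertex set `X`. -/
def stepOutside (E : Finset (V × V)) (X : Finset V) (a b : V) : Prop :=
  (a, b) ∈ E ∧ a ∉ X ∧ b ∉ X

/-- `X` is an `(r,t)`-vertex cut: `X ⊆ V \ {r,t}` and removing `X` leaves no
directed path from `r` to `t`. -/
def IsVertexCut (E : Finset (V × V)) (r t : V) (X : Finset V) : Prop :=
  r ∉ X ∧ t ∉ X ∧ ¬ Relation.ReflTransGen (stepOutside E X) r t

/-- Capacity of a vertex set. -/
def vcap (c : V → ℝ) (X : Finset V) : ℝ := ∑ v ∈ X, c v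

/-- In the split graph `H` (vertices `v_in = Sum.inl v` and `v_out = Sum.inr v`,
split arcs `(v_in, v_out)` of capacity `c v`, and arcs `(u_out, v_in)` of infinite
capacity for `(u,v) ∈ E`), a sink component `Z` induces the edge cut of arcs of `H`
entering `Z`.  The cut has finite capacity iff no infinite arc `(u_out, v_in)`
enters `Z`. -/
def FiniteSplitCut (E : Finset (V × V)) (r t : V) (Z : Finset (V ⊕ V)) : Prop :=
  Sum.inl t ∈ Z ∧ Sum.inr r ∉ Z ∧
    ∀ e ∈ E, ¬ (Sum.inr e.1 ∉ Z ∧ Sum.inl e.2 ∈ Z)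

/-- The capacity of the edge cut in `H` induced by sink component `Z`, when no
infinite arc crosses: the sum of `c v` over split arcs `(v_in, v_out)` entering `Z`. -/
def splitCutCap (c : V → ℝ) (Z : Finset (V ⊕ V)) : ℝ :=
  ∑ v ∈ Finset.univ.filter (fun v : V => Sum.inl v ∉ Z ∧ Sum.inr v ∈ Z), c v

section SplitGraph

variable {E : Finset (V × V)} {r t : V}

def splitCutVertices (Z : Finset (V ⊕ V)) : Finset V :=
  univ.filter fun v => Sum.inl v ∉ Z ∧ Sum.inr v ∈ Z

theorem mem_splitCutVertices {Z : Finset (V ⊕ V)} {v : V} :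
    v ∈ splitCutVertices Z ↔ Sum.inl v ∉ Z ∧ Sum.inr v ∈ Z := by
  simp [splitCutVertices]

theorem splitCutCap_eq_vcap (c : V → ℝ) (Z : Finset (V ⊕ V)) :
    splitCutCap c Z = vcap c (splitCutVertices Z) := rfl

omit [Fintype V] [DecidableEq V] in
theorem notMem_of_reflTransGen_stepOutside {X : Finset V} {a b : V}
    (h : Relation.ReflTransGen (stepOutside E X) a b) (ha : a ∉ X) : b ∉ X := by
  induction h with
  | refl => exact ha
  | tail _ hstep _ => exact hstep.2.2

omit [Fintype V] [DecidableEq V] in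
theorem IsVertexCut.ne {X : Finset V} (hX : IsVertexCut E r t X) : r ≠ t := by
  rintro rfl
  exact hX.2.2 .refl

theorem FiniteSplitCut.inr_notMem {Z : Finset (V ⊕ V)} (hZ : FiniteSplitCut E r t Z) {v : V}
    (hv : Relation.ReflTransGen (stepOutside E (splitCutVertices Z)) r v) : Sum.inr v ∉ Z := by
  induction hv with
  | refl => exact hZ.2.1
  | @tail a b _ hstep ih =>
    have hb : Sum.inl b ∉ Z := fun hb => hZ.2.2 (a, b) hstep.1 ⟨ih, hb⟩
    exact fun hb' => hstep.2.2 (mem_splitCutVertices.2 ⟨hb, hb'⟩)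

theorem FiniteSplitCut.isVertexCut {Z : Finset (V ⊕ V)} (hZ : FiniteSplitCut E r t Z)
    (hrt : r ≠ t) : IsVertexCut E r t (splitCutVertices Z) := by
  refine ⟨fun hr => hZ.2.1 (mem_splitCutVertices.1 hr).2,
    fun ht => (mem_splitCutVertices.1 ht).1 hZ.1, fun hpath => ?_⟩
  rcases hpath.cases_tail with h | ⟨a, hra, hat⟩
  · exact hrt h.symm
  · exact hZ.2.2 (a, t) hat.1 ⟨hZ.inr_notMem hra, hZ.1⟩

def sinkOfVertexCut (E : Finset (V × V)) (r : V) (X : Finset V) : Finset (V ⊕ V) :=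
  univ.filter <| Sum.elim
    (fun v => ¬ Relation.ReflTransGen (stepOutside E X) r v ∧ v ∉ X)
    (fun v => ¬ Relation.ReflTransGen (stepOutside E X) r v)

omit [DecidableEq V] in
theorem IsVertexCut.finiteSplitCut {X : Finset V} (hX : IsVertexCut E r t X) :
    FiniteSplitCut E r t (sinkOfVertexCut E r X) := by
  simp only [FiniteSplitCut, sinkOfVertexCut, mem_filter, mem_univ, true_and, Sum.elim_inl,
    Sum.elim_inr, not_not]
  refine ⟨⟨hX.2.2, hX.2.1⟩, .refl, fun ⟨u, v⟩ huv ⟨hu, hv, hvX⟩ => hv (hu.tail ⟨huv, ?_, hvX⟩)⟩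
  exact notMem_of_reflTransGen_stepOutside hu hX.1

theorem splitCutVertices_sinkOfVertexCut {X : Finset V} (hr : r ∉ X) :
    splitCutVertices (sinkOfVertexCut E r X) = X := by
  ext v
  simp only [mem_splitCutVertices, sinkOfVertexCut, mem_filter, mem_univ, true_and,
    Sum.elim_inl, Sum.elim_inr]
  constructor
  · rintro ⟨hv, hnr⟩
    exact not_not.1 fun hvX => hv ⟨hnr, hvX⟩
  · intro hvX
    have hnr : ¬ Relation.ReflTransGen (stepOutside E X) r v :=
      fun h => notMem_of_reflTransGen_stepOutside h hr hvX
    exact ⟨fun h => h.2 hvX, hnr⟩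

end SplitGraph

theorem stmt_12_general (E : Finset (V × V)) (c : V → ℝ)
    (r t : V)
    (X : Finset V) (hX : IsVertexCut E r t X)
    (hXmin : ∀ X' : Finset V, IsVertexCut E r t X' → vcap c X ≤ vcap c X') :
    (∀ Z : Finset (V ⊕ V), FiniteSplitCut E r t Z → vcap c X ≤ splitCutCap c Z) ∧
      (∃ Z : Finset (V ⊕ V), FiniteSplitCut E r t Z ∧ splitCutCap c Z = vcap c X) :=
  ⟨fun Z hZ => hXmin _ (hZ.isVertexCut hX.ne),
    ⟨_, hX.finiteSplitCut, by rw [splitCutCap_eq_vcap, splitCutVertices_sinkOfVertexCut hX.1]⟩⟩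

/-- correspondence between vertex cuts of `G` and finite edge cuts of
the split graph `H`.  Let `X` be a minimum `(r,t)`-vertex cut of `G`, where `t` is
neither `r` nor an out-neighbor of `r`.  Then every finite-capacity
`(r_out, t_in)`-edge cut of `H` has capacity at least `vcap c X`, and the minimum
`(r_out, t_in)`-edge cut capacity of `H` equals `vcap c X`. -/
theorem stmt_12 (E : Finset (V × V)) (c : V → ℝ) (hc : ∀ v, 0 ≤ c v)
    (r t : V) (hrt : r ≠ t) (hout : (r, t) ∉ E)
    (X : Finset V) (hX : IsVertexCut E r t X)
    (hXmin : ∀ X' : Finset V, IsVertexCut E r t X' → vcap c X ≤ vcap c X') :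
    (∀ Z : Finset (V ⊕ V), FiniteSplitCut E r t Z → vcap c X ≤ splitCutCap c Z) ∧
      (∃ Z : Finset (V ⊕ V), FiniteSplitCut E r t Z ∧ splitCutCap c Z = vcap c X) :=
  stmt_12_general E c r t X hX hXmin
end
end
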